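/- arXiv:1506.05506 — 2 statements merged into one kernel-verified Lean document; each statement's English description precedes it below -/
import Mathlib

section
/- The sum of squared deviations of y+ε equals ‖y − ȳ1_n‖² + (a(a+2)/(1+b))‖e‖², i.e., ‖y + ε − ȳ1_n‖² = ‖y − ȳ1_n‖² + (a(a+2)/(1+b))‖e‖². -/
/-!
Write `d = y - ȳ1`. Since `1` is a column of `X`, `d = e + Xw` for some `w`, and both `e` and `u` are
orthogonal to the column space of `X`; hence `e ⬝ d = ‖e‖²` and `u ⬝ d = 0`. The perturbation is
`ε = c v` with `c = a‖e‖/(1+b)` and `v = e/‖e‖ + √b u/‖u‖`, so `d ⬝ v = ‖e‖` and `‖v‖² = 1 + b`, and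
`‖d + ε‖² = ‖d‖² + 2c‖e‖ + c²(1+b) = ‖d‖² + a(a+2)‖e‖²/(1+b)`.
-/

open Matrix BigOperators

noncomputable def nrm {n : ℕ} (v : Fin n → ℝ) : ℝ := Real.sqrt (v ⬝ᵥ v)

section LeastSquares

variable {m k R : Type*} [Fintype k] [CommRing R]

noncomputable def olsResidual [Fintype m] [DecidableEq k] (X : Matrix m k R) (y : m → R) : m → R :=
  y - X *ᵥ ((Xᵀ * X)⁻¹ *ᵥ (Xᵀ *ᵥ y))

lemma olsResidual_add_mulVec [Fintype m] [DecidableEq k] (X : Matrix m k R) (y : m → R) :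
    olsResidual X y + X *ᵥ ((Xᵀ * X)⁻¹ *ᵥ (Xᵀ *ᵥ y)) = y :=
  sub_add_cancel _ _

lemma transpose_mulVec_olsResidual [Fintype m] [DecidableEq k] {X : Matrix m k R}
    (hX : IsUnit (Xᵀ * X).det) (y : m → R) : Xᵀ *ᵥ olsResidual X y = 0 := by
  rw [olsResidual, mulVec_sub, mulVec_mulVec, mulVec_mulVec, mul_nonsing_inv _ hX, one_mulVec,
    sub_self]

lemma dotProduct_add_mulVec_of_transpose_mulVec_eq_zero [Fintype m] {X : Matrix m k R} {v : m → R}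
    (hv : Xᵀ *ᵥ v = 0) (r : m → R) (w : k → R) : v ⬝ᵥ (r + X *ᵥ w) = v ⬝ᵥ r := by
  rw [dotProduct_add, dotProduct_mulVec, ← mulVec_transpose, hv, zero_dotProduct, add_zero]

lemma exists_mulVec_eq_const [DecidableEq k] {X : Matrix m k R} (hone : ∃ j, ∀ i, X i j = 1)
    (c : R) : ∃ w, X *ᵥ w = fun _ => c := by
  obtain ⟨j, hj⟩ := hone
  exact ⟨Pi.single j c, funext fun i => by simp [mulVec_single, hj]⟩

end LeastSquares

section EuclideanNorm

variable {n : ℕ}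

lemma nrm_sq (v : Fin n → ℝ) : nrm v ^ 2 = v ⬝ᵥ v :=
  Real.sq_sqrt (Finset.sum_nonneg fun _ _ => mul_self_nonneg _)

lemma nrm_ne_zero {v : Fin n → ℝ} (hv : v ≠ 0) : nrm v ≠ 0 := by
  rw [nrm, Real.sqrt_ne_zero']
  exact (Finset.sum_nonneg fun _ _ => mul_self_nonneg _).lt_of_ne'
    (dotProduct_self_eq_zero.not.mpr hv)

lemma nrm_sq_add_smul (d v : Fin n → ℝ) (c : ℝ) :
    nrm (d + c • v) ^ 2 = nrm d ^ 2 + 2 * c * (d ⬝ᵥ v) + c ^ 2 * (v ⬝ᵥ v) := by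
  simp only [nrm_sq, add_dotProduct, dotProduct_add, dotProduct_smul, smul_dotProduct,
    smul_eq_mul, dotProduct_comm v d]
  ring

lemma nrm_sq_add_perturbation {d e u : Fin n → ℝ} (hde : e ⬝ᵥ d = e ⬝ᵥ e) (hud : u ⬝ᵥ d = 0)
    (heu : e ⬝ᵥ u = 0) (he : e ≠ 0) (hu : u ≠ 0) (a : ℝ) {b : ℝ} (hb : 0 ≤ b) :
    nrm (d + (a * nrm e / (1 + b)) • ((nrm e)⁻¹ • e + Real.sqrt b • ((nrm u)⁻¹ • u))) ^ 2 =
      nrm d ^ 2 + a * (a + 2) / (1 + b) * nrm e ^ 2 := by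
  have hne := nrm_ne_zero he
  have hnu := nrm_ne_zero hu
  set v := (nrm e)⁻¹ • e + Real.sqrt b • ((nrm u)⁻¹ • u)
  have hdv : d ⬝ᵥ v = nrm e := by
    rw [dotProduct_add, dotProduct_smul, dotProduct_smul, dotProduct_smul, dotProduct_comm d e,
      dotProduct_comm d u, hde, hud, ← nrm_sq, smul_zero, smul_zero, add_zero, smul_eq_mul]
    field_simp
  have hvv : v ⬝ᵥ v = 1 + b := by
    simp only [v, dotProduct_add, add_dotProduct, dotProduct_smul, smul_dotProduct, smul_eq_mul,
      dotProduct_comm u e, heu, ← nrm_sq]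
    field_simp
    linear_combination nrm e * nrm u * Real.mul_self_sqrt hb
  have hb1 : 1 + b ≠ 0 := by positivity
  rw [nrm_sq_add_smul, hdv, hvv]
  field_simp
  ring

end EuclideanNorm

theorem sum_squared_deviations_general {n p : ℕ} (X : Matrix (Fin n) (Fin (p + 1)) ℝ)
    (hX : IsUnit (Xᵀ * X).det)
    (hone : ∃ j, ∀ i, X i j = 1)
    (y e : Fin n → ℝ)
    (he : e = y - X.mulVec ((Xᵀ * X)⁻¹.mulVec (Xᵀ.mulVec y)))
    (he0 : e ≠ 0) (u : Fin n → ℝ) (hu0 : u ≠ 0)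
    (hXu : Xᵀ.mulVec u = 0) (heu : e ⬝ᵥ u = 0)
    (a b : ℝ) (hb : 0 ≤ b)
    (ε : Fin n → ℝ)
    (hε : ε = (a * nrm e / (1 + b)) •
        ((nrm e)⁻¹ • e + Real.sqrt b • ((nrm u)⁻¹ • u)))
    (ybar : ℝ) :
    (nrm (y + ε - fun _ => ybar)) ^ 2 =
      (nrm (y - fun _ => ybar)) ^ 2 + (a * (a + 2) / (1 + b)) * (nrm e) ^ 2 := by
  change e = olsResidual X y at he
  have hXe : Xᵀ *ᵥ e = 0 := he ▸ transpose_mulVec_olsResidual hX y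
  obtain ⟨w, hw⟩ := exists_mulVec_eq_const hone ybar
  have hd : (y - fun _ => ybar) = e + X *ᵥ ((Xᵀ * X)⁻¹ *ᵥ (Xᵀ *ᵥ y) - w) := by
    rw [mulVec_sub, hw, ← add_sub_assoc, he, olsResidual_add_mulVec]
  have hde : e ⬝ᵥ (y - fun _ => ybar) = e ⬝ᵥ e := by
    rw [hd, dotProduct_add_mulVec_of_transpose_mulVec_eq_zero hXe]
  have hud : u ⬝ᵥ (y - fun _ => ybar) = 0 := by
    rw [hd, dotProduct_add_mulVec_of_transpose_mulVec_eq_zero hXu, dotProduct_comm, heu]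
  rw [add_sub_right_comm, hε, nrm_sq_add_perturbation hde hud heu he0 hu0 a hb]

/-- ‖y + ε − ȳ1‖² = ‖y − ȳ1‖² + (a(a+2)/(1+b))‖e‖². -/
theorem sum_squared_deviations {n p : ℕ} (X : Matrix (Fin n) (Fin (p + 1)) ℝ)
    (hX : IsUnit (Xᵀ * X).det)
    (hone : ∃ j, ∀ i, X i j = 1)
    (y e : Fin n → ℝ)
    (he : e = y - X.mulVec ((Xᵀ * X)⁻¹.mulVec (Xᵀ.mulVec y)))
    (he0 : e ≠ 0) (u : Fin n → ℝ) (hu0 : u ≠ 0)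
    (hXu : Xᵀ.mulVec u = 0) (heu : e ⬝ᵥ u = 0)
    (a b : ℝ) (ha : a ≠ 0) (hb : 0 ≤ b)
    (ε : Fin n → ℝ)
    (hε : ε = (a * nrm e / (1 + b)) •
        ((nrm e)⁻¹ • e + Real.sqrt b • ((nrm u)⁻¹ • u)))
    (ybar : ℝ) (hybar : ybar = (∑ i, y i) / (n : ℝ)) :
    (nrm (y + ε - fun _ => ybar)) ^ 2 =
      (nrm (y - fun _ => ybar)) ^ 2 + (a * (a + 2) / (1 + b)) * (nrm e) ^ 2 :=
  sum_squared_deviations_general X hX hone y e he he0 u hu0 hXu heu a b hb ε hε ybar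
end

section
/- Each t-value for the perturbed response satisfies t̃_j = ((1+b)/(1 + b + a(a+2)))^{1/2} t_j; in particular the ratio of the perturbed to original residual norm is ‖e + ε‖/‖e‖ = ((1 + b + a(a+2))/(1+b))^{1/2}. -/
/-!
The perturbation `ε` is a combination of the residual `e` and of `u`, both orthogonal to the
columns of `X`; so `Xᵀ ε = 0`, the least-squares coefficients do not move and the new residual is
`e + ε`. As `e ⊥ u`,
`‖e + ε‖² = ‖e‖² ((1 + b + a)² + a² b) / (1 + b)² = ‖e‖² (1 + b + a (a + 2)) / (1 + b)`,
and each t-value, having `‖e‖` in its denominator, scales by the inverse square root.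
-/

open Matrix BigOperators

section LeastSquares

variable {R m k : Type*} [CommRing R] [Fintype m] [Fintype k] [DecidableEq k]

noncomputable def olsCoef (X : Matrix m k R) (y : m → R) : k → R := (Xᵀ * X)⁻¹ *ᵥ (Xᵀ *ᵥ y)

noncomputable def olsResid (X : Matrix m k R) (y : m → R) : m → R := y - X *ᵥ olsCoef X y

theorem transpose_mulVec_olsResid {X : Matrix m k R} (hX : IsUnit (Xᵀ * X).det) (y : m → R) :
    Xᵀ *ᵥ olsResid X y = 0 := by
  rw [olsResid, olsCoef, mulVec_sub, mulVec_mulVec, mulVec_mulVec, mul_nonsing_inv _ hX,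
    one_mulVec, sub_self]

theorem olsCoef_add_of_transpose_mulVec_eq_zero {X : Matrix m k R} {ε : m → R}
    (hε : Xᵀ *ᵥ ε = 0) (y : m → R) : olsCoef X (y + ε) = olsCoef X y := by
  rw [olsCoef, olsCoef, mulVec_add, hε, add_zero]

theorem olsResid_add_of_transpose_mulVec_eq_zero {X : Matrix m k R} {ε : m → R}
    (hε : Xᵀ *ᵥ ε = 0) (y : m → R) : olsResid X (y + ε) = olsResid X y + ε := by
  rw [olsResid, olsResid, olsCoef_add_of_transpose_mulVec_eq_zero hε]
  abel

end LeastSquares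

theorem dotProduct_self_smul_add_smul {R m : Type*} [CommRing R] [Fintype m] {e u : m → R}
    (heu : e ⬝ᵥ u = 0) (α β : R) :
    (α • e + β • u) ⬝ᵥ (α • e + β • u) = α ^ 2 * (e ⬝ᵥ e) + β ^ 2 * (u ⬝ᵥ u) := by
  simp only [dotProduct_add, add_dotProduct, smul_dotProduct, dotProduct_smul, smul_eq_mul,
    heu, dotProduct_comm u e]
  ring

section Norm

variable {n : ℕ}

theorem nrm_mul_self (v : Fin n → ℝ) : nrm v * nrm v = v ⬝ᵥ v :=
  Real.mul_self_sqrt (dotProduct_self_star_nonneg v)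

theorem nrm_pos {v : Fin n → ℝ} (hv : v ≠ 0) : 0 < nrm v :=
  Real.sqrt_pos.mpr (dotProduct_self_star_pos_iff.mpr hv)

noncomputable def perturbation (a b : ℝ) (e u : Fin n → ℝ) : Fin n → ℝ :=
  (a * nrm e / (1 + b)) • ((nrm e)⁻¹ • e + Real.sqrt b • ((nrm u)⁻¹ • u))

theorem add_perturbation_eq {e : Fin n → ℝ} (he : e ≠ 0) (a b : ℝ) (u : Fin n → ℝ) :
    e + perturbation a b e u =
      (1 + a / (1 + b)) • e + (a * nrm e / (1 + b) * Real.sqrt b / nrm u) • u := by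
  have hcoef : a * nrm e / (1 + b) * (nrm e)⁻¹ = a / (1 + b) := by
    field_simp [(nrm_pos he).ne']
  ext i
  simp only [perturbation, Pi.add_apply, Pi.smul_apply, smul_eq_mul]
  linear_combination e i * hcoef

theorem nrm_add_perturbation {e u : Fin n → ℝ} (he : e ≠ 0) (hu : u ≠ 0) (heu : e ⬝ᵥ u = 0)
    (a : ℝ) {b : ℝ} (hb : 0 ≤ b) :
    nrm (e + perturbation a b e u) = nrm e * Real.sqrt ((1 + b + a * (a + 2)) / (1 + b)) := by
  have hb1 : 1 + b ≠ 0 := by positivity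
  have hu' := (nrm_pos hu).ne'
  have hsq : (e + perturbation a b e u) ⬝ᵥ (e + perturbation a b e u) =
      nrm e ^ 2 * ((1 + b + a * (a + 2)) / (1 + b)) := by
    rw [add_perturbation_eq he, dotProduct_self_smul_add_smul heu, ← nrm_mul_self e,
      ← nrm_mul_self u]
    field_simp
    rw [Real.sq_sqrt hb]
    ring
  rw [nrm, hsq, Real.sqrt_mul (sq_nonneg _), Real.sqrt_sq (nrm_pos he).le]

end Norm

theorem t_values_perturbed_general {n p : ℕ} (X : Matrix (Fin n) (Fin (p + 1)) ℝ)
    (hX : IsUnit (Xᵀ * X).det)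
    (y e : Fin n → ℝ)
    (he : e = y - X.mulVec ((Xᵀ * X)⁻¹.mulVec (Xᵀ.mulVec y)))
    (he0 : e ≠ 0) (u : Fin n → ℝ) (hu0 : u ≠ 0)
    (hXu : Xᵀ.mulVec u = 0) (heu : e ⬝ᵥ u = 0)
    (a b : ℝ) (hb : 0 ≤ b)
    (ε : Fin n → ℝ)
    (hε : ε = (a * nrm e / (1 + b)) •
        ((nrm e)⁻¹ • e + Real.sqrt b • ((nrm u)⁻¹ • u)))
    (βhat βhatt : Fin (p + 1) → ℝ)
    (hβ : βhat = (Xᵀ * X)⁻¹.mulVec (Xᵀ.mulVec y))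
    (hβt : βhatt = (Xᵀ * X)⁻¹.mulVec (Xᵀ.mulVec (y + ε)))
    (d : Fin (p + 1) → ℝ)
    (t tt : Fin (p + 1) → ℝ)
    (ht : t = fun j => Real.sqrt ((n : ℝ) - p - 1) / d j * (βhat j / nrm e))
    (htt : tt = fun j =>
      Real.sqrt ((n : ℝ) - p - 1) / d j *
        (βhatt j / nrm ((y + ε) - X.mulVec βhatt))) :
    (∀ j, tt j = Real.sqrt ((1 + b) / (1 + b + a * (a + 2))) * t j) ∧
      nrm (e + ε) / nrm e = Real.sqrt ((1 + b + a * (a + 2)) / (1 + b)) := by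
  have hXe : Xᵀ *ᵥ e = 0 := he ▸ transpose_mulVec_olsResid hX y
  have hXε : Xᵀ *ᵥ ε = 0 := by simp [hε, mulVec_add, mulVec_smul, hXe, hXu]
  have hββ : βhatt = βhat := by
    rw [hβt, hβ]; exact olsCoef_add_of_transpose_mulVec_eq_zero hXε y
  have hres : y + ε - X *ᵥ βhatt = e + ε := by
    rw [hβt, he]; exact olsResid_add_of_transpose_mulVec_eq_zero hXε y
  have hnrm : nrm (e + ε) = nrm e * Real.sqrt ((1 + b + a * (a + 2)) / (1 + b)) :=
    hε ▸ nrm_add_perturbation he0 hu0 heu a hb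
  refine ⟨fun j => ?_, ?_⟩
  · rw [htt, ht, hres, hββ, hnrm, ← inv_div, Real.sqrt_inv]
    simp only [div_eq_mul_inv, mul_inv, inv_inv]
    ring
  · rw [hnrm, mul_div_cancel_left₀ _ (nrm_pos he0).ne']

/-- t̃_j = ((1+b)/(1 + b + a(a+2)))^{1/2} t_j for every j, and
‖e + ε‖/‖e‖ = ((1 + b + a(a+2))/(1+b))^{1/2}. -/
theorem t_values_perturbed {n p : ℕ} (X : Matrix (Fin n) (Fin (p + 1)) ℝ)
    (hX : IsUnit (Xᵀ * X).det) (hn : p + 1 < n)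
    (y e : Fin n → ℝ)
    (he : e = y - X.mulVec ((Xᵀ * X)⁻¹.mulVec (Xᵀ.mulVec y)))
    (he0 : e ≠ 0) (u : Fin n → ℝ) (hu0 : u ≠ 0)
    (hXu : Xᵀ.mulVec u = 0) (heu : e ⬝ᵥ u = 0)
    (a b : ℝ) (ha : a ≠ 0) (hb : 0 ≤ b)
    (hpos : 0 < 1 + b + a * (a + 2))
    (ε : Fin n → ℝ)
    (hε : ε = (a * nrm e / (1 + b)) •
        ((nrm e)⁻¹ • e + Real.sqrt b • ((nrm u)⁻¹ • u)))
    (βhat βhatt : Fin (p + 1) → ℝ)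
    (hβ : βhat = (Xᵀ * X)⁻¹.mulVec (Xᵀ.mulVec y))
    (hβt : βhatt = (Xᵀ * X)⁻¹.mulVec (Xᵀ.mulVec (y + ε)))
    (d : Fin (p + 1) → ℝ) (hd : d = fun j => (Xᵀ * X)⁻¹ j j)
    (t tt : Fin (p + 1) → ℝ)
    (ht : t = fun j => Real.sqrt ((n : ℝ) - p - 1) / d j * (βhat j / nrm e))
    (htt : tt = fun j =>
      Real.sqrt ((n : ℝ) - p - 1) / d j *
        (βhatt j / nrm ((y + ε) - X.mulVec βhatt))) :
    (∀ j, tt j = Real.sqrt ((1 + b) / (1 + b + a * (a + 2))) * t j) ∧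
      nrm (e + ε) / nrm e = Real.sqrt ((1 + b + a * (a + 2)) / (1 + b)) :=
  t_values_perturbed_general X hX y e he he0 u hu0 hXu heu a b hb ε hε βhat βhatt hβ hβt d t tt ht
    htt
end
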